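/- Let (A,V) and (B,W) be permutation groups with B ≠ I_2, and let T be the set of orbits of A on V. If the parallel multiple B×I_T does not belong to GR, then the imprimitive wreath product A≀B does not belong to GR. -/

import Mathlib

open scoped Classical

/-- The automorphism group of a colored graph, i.e. of a coloring of the
unordered pairs of distinct elements of `V` (values of `E` on diagonal pairs
are irrelevant). -/
def graphAut {V C : Type} (E : Sym2 V → C) : Subgroup (Equiv.Perm V) where
  carrier := {σ | ∀ v w : V, v ≠ w → E s(σ v, σ w) = E s(v, w)}
  one_mem' := by intro v w _; rfl
  mul_mem' := by
    intro a b ha hb v w hvw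
    have hb' := hb v w hvw
    have ha' := ha (b v) (b w) (fun h => hvw (b.injective h))
    simpa [Equiv.Perm.mul_apply] using ha'.trans hb'
  inv_mem' := by
    intro a ha v w hvw
    have h : a⁻¹ v ≠ a⁻¹ w := fun h => hvw (by simpa using congrArg a h)
    have := ha (a⁻¹ v) (a⁻¹ w) h
    simpa using this.symm

/-- The automorphism group of a colored digraph, i.e. of a coloring of the
ordered pairs of elements of `V`. -/
def digraphAut {V C : Type} (E : V → V → C) : Subgroup (Equiv.Perm V) where
  carrier := {σ | ∀ v w : V, E (σ v) (σ w) = E v w}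
  one_mem' := by intro v w; rfl
  mul_mem' := by
    intro a b ha hb v w
    simpa [Equiv.Perm.mul_apply] using (ha (b v) (b w)).trans (hb v w)
  inv_mem' := by
    intro a ha v w
    simpa using (ha (a⁻¹ v) (a⁻¹ w)).symm

/-- The automorphism group of a colored hypergraph, i.e. of a coloring of the
nonempty subsets of `W`. -/
def hyperAut {W C : Type} (E : Set W → C) : Subgroup (Equiv.Perm W) where
  carrier := {σ | ∀ X : Set W, X.Nonempty → E (⇑σ '' X) = E X}
  one_mem' := by intro X hX; simp
  mul_mem' := by
    intro a b ha hb X hX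
    have h1 : ⇑(a * b) '' X = ⇑a '' (⇑b '' X) := by
      rw [Equiv.Perm.coe_mul, Set.image_comp]
    rw [h1, ha _ (hX.image _), hb _ hX]
  inv_mem' := by
    intro a ha X hX
    have h1 : ⇑a '' (⇑a⁻¹ '' X) = X := by
      rw [← Set.image_comp]
      have : ⇑a ∘ ⇑a⁻¹ = id := by funext x; simp
      rw [this, Set.image_id]
    have := ha (⇑a⁻¹ '' X) (hX.image _)
    rw [h1] at this
    exact this.symm

/-- `A` belongs to the class GR: it is the automorphism group of some colored graph. -/
def IsGR {V : Type} (A : Subgroup (Equiv.Perm V)) : Prop :=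
  ∃ (C : Type) (E : Sym2 V → C), graphAut E = A

/-- `A` belongs to the class DGR: it is the automorphism group of some colored digraph. -/
def IsDGR {V : Type} (A : Subgroup (Equiv.Perm V)) : Prop :=
  ∃ (C : Type) (E : V → V → C), digraphAut E = A

/-- `B` belongs to the class BGR: it is the automorphism group of some colored hypergraph. -/
def IsBGR {W : Type} (B : Subgroup (Equiv.Perm W)) : Prop :=
  ∃ (C : Type) (E : Set W → C), hyperAut E = B

/-- `(A, V)` is (permutation isomorphic to) the trivial permutation group `I₂`
on a two-element set. -/
def IsI2 {V : Type} (A : Subgroup (Equiv.Perm V)) : Prop :=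
  A = ⊥ ∧ Nat.card V = 2

/-- The permutation group `A` acts transitively on `V`. -/
def permTransitive {V : Type} (A : Subgroup (Equiv.Perm V)) : Prop :=
  ∀ v w : V, ∃ a ∈ A, a v = w

/-- The orbit of a point under a permutation group. -/
def ptOrbit {V : Type} (A : Subgroup (Equiv.Perm V)) (v : V) : Set V :=
  {u | ∃ a ∈ A, a v = u}

/-- The orbit (2*-orbital) of an unordered pair under a permutation group. -/
def pairOrbit {V : Type} (A : Subgroup (Equiv.Perm V)) (p : Sym2 V) : Set (Sym2 V) :=
  {q | ∃ a ∈ A, Sym2.map ⇑a p = q}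

/-- The orbital of an ordered pair under a permutation group. -/
def orbital {V : Type} (A : Subgroup (Equiv.Perm V)) (x : V × V) : Set (V × V) :=
  {y | ∃ a ∈ A, (a x.1, a x.2) = y}

/-- The closure `cl(A)` of a permutation group `A`: the group of all permutations of `V`
mapping each 2*-orbital of `A` onto itself. -/
def grCl {V : Type} (A : Subgroup (Equiv.Perm V)) : Subgroup (Equiv.Perm V) where
  carrier := {σ | ∀ p : Sym2 V, ¬ p.IsDiag → Sym2.map ⇑σ '' pairOrbit A p = pairOrbit A p}
  one_mem' := by
    intro p hp
    rw [Equiv.Perm.coe_one, Sym2.map_id, Set.image_id]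
  mul_mem' := by
    intro a b ha hb p hp
    rw [Equiv.Perm.coe_mul, Sym2.map_comp, Set.image_comp, hb p hp, ha p hp]
  inv_mem' := by
    intro a ha p hp
    have h1 : Sym2.map ⇑a⁻¹ ∘ Sym2.map ⇑a = id := by
      rw [← Sym2.map_comp]
      have : ⇑a⁻¹ ∘ ⇑a = id := by funext x; simp
      rw [this, Sym2.map_id]
    conv_lhs => rw [← ha p hp, ← Set.image_comp, h1, Set.image_id]

/-- The permutation `α` transposes the orbitals of `A`: it maps every orbital
onto the orbital paired with it. -/
def TransposesOrbitals {V : Type} (A : Subgroup (Equiv.Perm V)) (α : Equiv.Perm V) : Prop :=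
  ∀ x : V × V, (fun y : V × V => (α y.1, α y.2)) '' orbital A x = Prod.swap '' orbital A x

/-- The rank of a permutation group: the (cardinal) number of its orbitals. -/
def orbRank {V : Type} (A : Subgroup (Equiv.Perm V)) : Cardinal :=
  Cardinal.mk {O : Set (V × V) // ∃ x, O = orbital A x}

/-- `nsp A`: the number of pairs `{O, O'}` of distinct mutually paired
(i.e. non-self-paired) orbitals of `A`. -/
noncomputable def nsp {V : Type} (A : Subgroup (Equiv.Perm V)) : ℕ :=
  Nat.card {O : Set (V × V) // (∃ x, O = orbital A x) ∧ Prod.swap '' O ≠ O} / 2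

/-- The type of orbits of a permutation group `(A, V)` on `V`. -/
def orbitType {V : Type} (A : Subgroup (Equiv.Perm V)) : Type :=
  {O : Set V // ∃ v, O = ptOrbit A v}

/-- The imprimitive wreath product `A ≀ B` of permutation groups `(A,V)` and `(B,W)`,
acting on `V × W`. -/
def imprimWr {V W : Type} (A : Subgroup (Equiv.Perm V)) (B : Subgroup (Equiv.Perm W)) :
    Subgroup (Equiv.Perm (V × W)) where
  carrier := {γ | ∃ β ∈ B, ∃ α : W → Equiv.Perm V, (∀ w, α w ∈ A) ∧
    ∀ p : V × W, γ p = (α p.2 p.1, β p.2)}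
  one_mem' := ⟨1, B.one_mem, fun _ => 1, fun _ => A.one_mem, fun p => rfl⟩
  mul_mem' := by
    rintro γ₁ γ₂ ⟨β₁, hβ₁, α₁, hα₁, h₁⟩ ⟨β₂, hβ₂, α₂, hα₂, h₂⟩
    refine ⟨β₁ * β₂, B.mul_mem hβ₁ hβ₂, fun w => α₁ (β₂ w) * α₂ w,
      fun w => A.mul_mem (hα₁ _) (hα₂ _), fun p => ?_⟩
    have h0 : (γ₁ * γ₂) p = γ₁ (γ₂ p) := rfl
    rw [h0, h₂ p, h₁ (α₂ p.2 p.1, β₂ p.2)]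
    rfl
  inv_mem' := by
    rintro γ ⟨β, hβ, α, hα, h⟩
    refine ⟨β⁻¹, B.inv_mem hβ, fun w => (α (β⁻¹ w))⁻¹,
      fun w => A.inv_mem (hα _), fun p => ?_⟩
    have key : γ ((α (β⁻¹ p.2))⁻¹ p.1, β⁻¹ p.2) = p := by
      rw [h]
      simp
    calc γ⁻¹ p = γ⁻¹ (γ ((α (β⁻¹ p.2))⁻¹ p.1, β⁻¹ p.2)) := by rw [key]
    _ = ((α (β⁻¹ p.2))⁻¹ p.1, β⁻¹ p.2) := by simp

/-- The wreath product `A Wr B` of permutation groups `(A,V)` and `(B,W)` in its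
product action on the set `V^W` of functions `W → V`. -/
def prodWr {V W : Type} (A : Subgroup (Equiv.Perm V)) (B : Subgroup (Equiv.Perm W)) :
    Subgroup (Equiv.Perm (W → V)) where
  carrier := {φ | ∃ β ∈ B, ∃ α : W → Equiv.Perm V, (∀ w, α w ∈ A) ∧
    ∀ (f : W → V) (w : W), φ f w = α w (f (β w))}
  one_mem' := ⟨1, B.one_mem, fun _ => 1, fun _ => A.one_mem, fun f w => rfl⟩
  mul_mem' := by
    rintro φ₁ φ₂ ⟨β₁, hβ₁, α₁, hα₁, h₁⟩ ⟨β₂, hβ₂, α₂, hα₂, h₂⟩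
    refine ⟨β₂ * β₁, B.mul_mem hβ₂ hβ₁, fun w => α₁ w * α₂ (β₁ w),
      fun w => A.mul_mem (hα₁ _) (hα₂ _), fun f w => ?_⟩
    have h0 : (φ₁ * φ₂) f = φ₁ (φ₂ f) := rfl
    rw [h0, h₁ (φ₂ f) w, h₂ f (β₁ w)]
    rfl
  inv_mem' := by
    rintro φ ⟨β, hβ, α, hα, h⟩
    refine ⟨β⁻¹, B.inv_mem hβ, fun w => (α (β⁻¹ w))⁻¹,
      fun w => A.inv_mem (hα _), fun f w => ?_⟩
    have hf : f = φ (φ⁻¹ f) := by simp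
    conv_rhs => rw [hf]
    rw [h (φ⁻¹ f) (β⁻¹ w)]
    simp

/-- The parallel multiple `B × I_T` of a permutation group `(B, W)`, acting on `W × T`. -/
def parMul {W : Type} (B : Subgroup (Equiv.Perm W)) (T : Type) :
    Subgroup (Equiv.Perm (W × T)) where
  carrier := {γ | ∃ β ∈ B, ∀ p : W × T, γ p = (β p.1, p.2)}
  one_mem' := ⟨1, B.one_mem, fun p => rfl⟩
  mul_mem' := by
    rintro γ₁ γ₂ ⟨β₁, hβ₁, h₁⟩ ⟨β₂, hβ₂, h₂⟩
    refine ⟨β₁ * β₂, B.mul_mem hβ₁ hβ₂, fun p => ?_⟩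
    have h0 : (γ₁ * γ₂) p = γ₁ (γ₂ p) := rfl
    rw [h0, h₂, h₁]
    rfl
  inv_mem' := by
    rintro γ ⟨β, hβ, h⟩
    refine ⟨β⁻¹, B.inv_mem hβ, fun p => ?_⟩
    have key : γ (β⁻¹ p.1, p.2) = p := by rw [h]; simp
    calc γ⁻¹ p = γ⁻¹ (γ (β⁻¹ p.1, p.2)) := by rw [key]
    _ = (β⁻¹ p.1, p.2) := by simp

/-- The composition `H2 ∘ H1` of a colored graph `H2` on `W` with a colored graph
`H1` on `V`: a colored graph on `V × W`. -/
noncomputable def compGraph {V W C : Type} (H2 : Sym2 W → C) (H1 : Sym2 V → C) :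
    Sym2 (V × W) → C :=
  Sym2.lift ⟨fun p q => if p.2 = q.2 then H1 s(p.1, q.1) else H2 s(p.2, q.2), by
    intro p q
    dsimp only
    by_cases h : p.2 = q.2
    · rw [if_pos h, if_pos h.symm, Sym2.eq_swap]
    · rw [if_neg h, if_neg (fun hh => h hh.symm), Sym2.eq_swap]⟩


section Stmt5Aux

variable {V W C : Type}

def wrPerm (α : W → Equiv.Perm V) (β : Equiv.Perm W) : Equiv.Perm (V × W) where
  toFun p := (α p.2 p.1, β p.2)
  invFun p := ((α (β⁻¹ p.2))⁻¹ p.1, β⁻¹ p.2)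
  left_inv p := by simp
  right_inv p := by simp

@[simp] lemma wrPerm_apply (α : W → Equiv.Perm V) (β : Equiv.Perm W) (p : V × W) :
    wrPerm α β p = (α p.2 p.1, β p.2) := rfl

lemma wrPerm_mem {A : Subgroup (Equiv.Perm V)} {B : Subgroup (Equiv.Perm W)}
    {α : W → Equiv.Perm V} {β : Equiv.Perm W} (hα : ∀ w, α w ∈ A) (hβ : β ∈ B) :
    wrPerm α β ∈ imprimWr A B := ⟨β, hβ, α, hα, fun _ => rfl⟩

lemma mem_graphAut {X C' : Type} {E : Sym2 X → C'} {σ : Equiv.Perm X} :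
    σ ∈ graphAut E ↔ ∀ v w : X, v ≠ w → E s(σ v, σ w) = E s(v, w) := Iff.rfl

lemma mem_parMul {T : Type} {B : Subgroup (Equiv.Perm W)} {σ : Equiv.Perm (W × T)} :
    σ ∈ parMul B T ↔ ∃ β ∈ B, ∀ p : W × T, σ p = (β p.1, p.2) := Iff.rfl

lemma mem_imprimWr {A : Subgroup (Equiv.Perm V)} {B : Subgroup (Equiv.Perm W)}
    {γ : Equiv.Perm (V × W)} :
    γ ∈ imprimWr A B ↔ ∃ β ∈ B, ∃ α : W → Equiv.Perm V, (∀ w, α w ∈ A) ∧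
      ∀ p : V × W, γ p = (α p.2 p.1, β p.2) := Iff.rfl

noncomputable def orep (A : Subgroup (Equiv.Perm V)) (t : orbitType A) : V := t.2.choose

lemma orep_spec (A : Subgroup (Equiv.Perm V)) (t : orbitType A) :
    t.1 = ptOrbit A (orep A t) := t.2.choose_spec

def tOf (A : Subgroup (Equiv.Perm V)) (v : V) : orbitType A := ⟨ptOrbit A v, v, rfl⟩

lemma exists_orep_map (A : Subgroup (Equiv.Perm V)) (v : V) :
    ∃ a ∈ A, a (orep A (tOf A v)) = v := by
  have h := orep_spec A (tOf A v)
  have hv : v ∈ ptOrbit A (orep A (tOf A v)) := by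
    rw [← h]
    exact ⟨1, A.one_mem, rfl⟩
  exact hv

end Stmt5Aux

section Stmt5Aux2

variable {V W C : Type}
variable {A : Subgroup (Equiv.Perm V)} {B : Subgroup (Equiv.Perm W)} {E : Sym2 (V × W) → C}

lemma moveA (hE : graphAut E = imprimWr A B)
    {w w' : W} (hww' : w ≠ w') {a : Equiv.Perm V} (ha : a ∈ A) (u x : V) :
    E s((a u, w), (x, w')) = E s((u, w), (x, w')) := by
  have hmem : wrPerm (fun z => if z = w then a else 1) 1 ∈ graphAut E := by
    rw [hE]
    exact wrPerm_mem (fun z => by split_ifs; exacts [ha, A.one_mem]) B.one_mem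
  have h := mem_graphAut.mp hmem (u, w) (x, w')
    (fun hc => hww' (congrArg Prod.snd hc))
  have h1 : wrPerm (fun z => if z = w then a else 1) 1 (u, w) = (a u, w) := by
    simp [wrPerm_apply]
  have h2 : wrPerm (fun z => if z = w then a else 1) 1 (x, w') = (x, w') := by
    simp [wrPerm_apply, hww'.symm]
  rw [h1, h2] at h
  exact h

lemma moveB (hE : graphAut E = imprimWr A B) {β : Equiv.Perm W} (hβ : β ∈ B)
    (p q : V × W) (hpq : p ≠ q) :
    E s((p.1, β p.2), (q.1, β q.2)) = E s(p, q) := by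
  have hmem : wrPerm (fun _ => (1 : Equiv.Perm V)) β ∈ graphAut E := by
    rw [hE]; exact wrPerm_mem (fun _ => A.one_mem) hβ
  have h := mem_graphAut.mp hmem p q hpq
  simpa [wrPerm_apply] using h

lemma cross_rep (hE : graphAut E = imprimWr A B) {w w' : W} (hww' : w ≠ w') (v v' : V) :
    E s((v, w), (v', w')) = E s((orep A (tOf A v), w), (orep A (tOf A v'), w')) := by
  obtain ⟨a, ha, hav⟩ := exists_orep_map A v
  obtain ⟨a', ha', hav'⟩ := exists_orep_map A v'
  have h1 : E s((v, w), (v', w')) = E s((orep A (tOf A v), w), (v', w')) := by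
    have := moveA hE hww' ha (orep A (tOf A v)) v'
    rwa [hav] at this
  have h2 : E s((v', w'), (orep A (tOf A v), w))
      = E s((orep A (tOf A v'), w'), (orep A (tOf A v), w)) := by
    have := moveA hE hww'.symm ha' (orep A (tOf A v')) (orep A (tOf A v))
    rwa [hav'] at this
  calc E s((v, w), (v', w')) = E s((orep A (tOf A v), w), (v', w')) := h1
    _ = E s((v', w'), (orep A (tOf A v), w)) := by rw [Sym2.eq_swap]
    _ = E s((orep A (tOf A v'), w'), (orep A (tOf A v), w)) := h2
    _ = E s((orep A (tOf A v), w), (orep A (tOf A v'), w')) := by rw [Sym2.eq_swap]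

def fEquiv (A : Subgroup (Equiv.Perm V)) (E : Sym2 (V × W) → C) (w w' : W) : Prop :=
  ∃ δ : Equiv.Perm V, (∀ v, ptOrbit A (δ v) = ptOrbit A v) ∧
    ∀ v v' : V, v ≠ v' → E s((δ v, w'), (δ v', w')) = E s((v, w), (v', w))

lemma fEquiv_refl (w : W) : fEquiv A E w w :=
  ⟨1, fun _ => rfl, fun _ _ _ => rfl⟩

lemma fEquiv_symm {w w' : W} (h : fEquiv A E w w') : fEquiv A E w' w := by
  obtain ⟨δ, h1, h2⟩ := h
  refine ⟨δ⁻¹, fun v => ?_, fun v v' hvv' => ?_⟩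
  · have := h1 (δ⁻¹ v); rw [(show ∀ x, δ (δ⁻¹ x) = x from fun x => Equiv.apply_symm_apply δ x)] at this; exact this.symm
  · have hne : δ⁻¹ v ≠ δ⁻¹ v' := fun hc => hvv' (by simpa using congrArg δ hc)
    have := h2 (δ⁻¹ v) (δ⁻¹ v') hne
    rw [(show ∀ x, δ (δ⁻¹ x) = x from fun x => Equiv.apply_symm_apply δ x), (show ∀ x, δ (δ⁻¹ x) = x from fun x => Equiv.apply_symm_apply δ x)] at this
    exact this.symm

lemma fEquiv_trans {w w' w'' : W} (h : fEquiv A E w w') (h' : fEquiv A E w' w'') :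
    fEquiv A E w w'' := by
  obtain ⟨δ, h1, h2⟩ := h
  obtain ⟨ε, g1, g2⟩ := h'
  refine ⟨ε * δ, fun v => ?_, fun v v' hvv' => ?_⟩
  · rw [Equiv.Perm.mul_apply, g1, h1]
  · have hne : δ v ≠ δ v' := fun hc => hvv' (δ.injective hc)
    rw [Equiv.Perm.mul_apply, Equiv.Perm.mul_apply, g2 (δ v) (δ v') hne, h2 v v' hvv']

def fQ (A : Subgroup (Equiv.Perm V)) (E : Sym2 (V × W) → C) (w : W) : Set W :=
  {x | fEquiv A E w x}

lemma fQ_eq_of {w w' : W} (h : fEquiv A E w w') : fQ A E w = fQ A E w' :=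
  Set.ext fun _ => ⟨fun hx => fEquiv_trans (fEquiv_symm h) hx, fun hx => fEquiv_trans h hx⟩

lemma fEquiv_of_fQ_eq {w w' : W} (h : fQ A E w = fQ A E w') : fEquiv A E w w' := by
  have hx : w' ∈ fQ A E w' := fEquiv_refl w'
  rw [← h] at hx
  exact hx

lemma fEquiv_beta (hE : graphAut E = imprimWr A B) {β : Equiv.Perm W} (hβ : β ∈ B) (w : W) :
    fEquiv A E w (β w) := by
  refine ⟨1, fun _ => rfl, fun v v' hvv' => ?_⟩
  have h := moveB hE hβ (v, w) (v', w) (fun hc => hvv' (congrArg Prod.fst hc))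
  simpa using h

lemma fQ_beta (hE : graphAut E = imprimWr A B) {β : Equiv.Perm W} (hβ : β ∈ B) (w : W) :
    fQ A E (β w) = fQ A E w :=
  (fQ_eq_of (fEquiv_beta hE hβ w)).symm

noncomputable def bigF (A : Subgroup (Equiv.Perm V)) (E : Sym2 (V × W) → C) :
    Sym2 (W × orbitType A) → Sym2 (orbitType A) ⊕ (Sym2 (orbitType A × Set W) × C) :=
  Sym2.lift ⟨fun p q =>
    if p.1 = q.1 then Sum.inl s(p.2, q.2)
    else Sum.inr (s((p.2, fQ A E p.1), (q.2, fQ A E q.1)),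
      E s((orep A p.2, p.1), (orep A q.2, q.1))), by
    intro p q
    dsimp only
    by_cases h : p.1 = q.1
    · rw [if_pos h, if_pos h.symm, Sym2.eq_swap]
    · rw [if_neg h, if_neg (fun hc => h hc.symm)]
      exact congrArg Sum.inr (Prod.ext Sym2.eq_swap (congrArg E Sym2.eq_swap))⟩

lemma bigF_pair (w w' : W) (t t' : orbitType A) :
    bigF A E s((w, t), (w', t')) =
      if w = w' then Sum.inl s(t, t')
      else Sum.inr (s((t, fQ A E w), (t', fQ A E w')),
        E s((orep A t, w), (orep A t', w'))) := by
  rw [bigF, Sym2.lift_mk]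

end Stmt5Aux2

section Stmt5Aux3

variable {V W C : Type}
variable {A : Subgroup (Equiv.Perm V)} {B : Subgroup (Equiv.Perm W)} {E : Sym2 (V × W) → C}
variable {σ : Equiv.Perm (W × orbitType A)}

lemma sigma_fst (hσ : σ ∈ graphAut (bigF A E)) (w : W) (t t' : orbitType A) :
    (σ (w, t)).1 = (σ (w, t')).1 := by
  by_cases h : t = t'
  · rw [h]
  · have hne : ((w, t) : W × orbitType A) ≠ (w, t') := fun hc => h (congrArg Prod.snd hc)
    have hc := mem_graphAut.mp hσ (w, t) (w, t') hne
    rcases hP : σ (w, t) with ⟨x, s⟩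
    rcases hQ : σ (w, t') with ⟨x', s'⟩
    rw [hP, hQ, bigF_pair, bigF_pair, if_pos rfl] at hc
    show x = x'
    by_contra hff
    rw [if_neg hff] at hc
    exact Sum.inr_ne_inl hc

lemma sigma_ne_fst (hσ : σ ∈ graphAut (bigF A E)) {w w' : W} (hww' : w ≠ w')
    (t t' : orbitType A) : (σ (w, t)).1 ≠ (σ (w', t')).1 := by
  have hne : ((w, t) : W × orbitType A) ≠ (w', t') := fun hc => hww' (congrArg Prod.fst hc)
  have hc := mem_graphAut.mp hσ (w, t) (w', t') hne
  rcases hP : σ (w, t) with ⟨x, s⟩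
  rcases hQ : σ (w', t') with ⟨x', s'⟩
  rw [hP, hQ, bigF_pair, bigF_pair, if_neg hww'] at hc
  show x ≠ x'
  intro hff
  rw [if_pos hff] at hc
  exact Sum.inl_ne_inr hc

lemma sigma_snd [Nontrivial W] (hσ : σ ∈ graphAut (bigF A E)) (w : W) (t : orbitType A) :
    (σ (w, t)).2 = t := by
  rcases subsingleton_or_nontrivial (orbitType A) with hs | hn
  · exact Subsingleton.elim _ _
  · by_contra hne0
    obtain ⟨w', hw'⟩ := exists_ne w
    have key : ∀ t' : orbitType A, (σ (w, t)).2 = t' := by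
      intro t'
      have hnept : ((w, t) : W × orbitType A) ≠ (w', t') :=
        fun hc => hw' (congrArg Prod.fst hc).symm
      have hc := mem_graphAut.mp hσ (w, t) (w', t') hnept
      rcases hP : σ (w, t) with ⟨x, s⟩
      rcases hQ : σ (w', t') with ⟨x', s'⟩
      have hxx : x ≠ x' := by
        have := sigma_ne_fst hσ (Ne.symm hw') t t' (E := E)
        rwa [hP, hQ] at this
      rw [hP, hQ, bigF_pair, bigF_pair, if_neg hxx, if_neg (Ne.symm hw')] at hc
      simp only [Sum.inr.injEq, Prod.mk.injEq] at hc
      have h1 := hc.1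
      rw [Sym2.eq_iff] at h1
      show s = t'
      rcases h1 with ⟨h2, _⟩ | ⟨h2, _⟩
      · exfalso
        apply hne0
        rw [hP]
        exact (Prod.ext_iff.mp h2).1
      · exact (Prod.ext_iff.mp h2).1
    obtain ⟨t₁, t₂, ht12⟩ := exists_pair_ne (orbitType A)
    exact ht12 ((key t₁).symm.trans (key t₂))

lemma perm_form [Nontrivial W] (hσ : σ ∈ graphAut (bigF A E)) (t₀ : orbitType A)
    (w : W) (t : orbitType A) : σ (w, t) = ((σ (w, t₀)).1, t) :=
  Prod.ext (sigma_fst hσ w t t₀) (sigma_snd hσ w t)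

end Stmt5Aux3

section Stmt5Main

variable {V W C : Type}

theorem bigF_aut [Nontrivial V] [Nontrivial W]
    (A : Subgroup (Equiv.Perm V)) (B : Subgroup (Equiv.Perm W)) (hB : ¬ IsI2 B)
    (E : Sym2 (V × W) → C) (hE : graphAut E = imprimWr A B) :
    graphAut (bigF A E) = parMul B (orbitType A) := by
  haveI : Nonempty (orbitType A) := ⟨tOf A (Classical.arbitrary V)⟩
  ext σ
  constructor
  · intro hσ
    have t₀ : orbitType A := Classical.arbitrary _
    have hσ' : σ⁻¹ ∈ graphAut (bigF A E) := (graphAut (bigF A E)).inv_mem hσ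
    set π : W → W := fun w => (σ (w, t₀)).1 with hπdef
    have hform : ∀ w t, σ (w, t) = (π w, t) := fun w t => perm_form hσ t₀ w t
    have hforminv : ∀ w t, σ⁻¹ (w, t) = ((σ⁻¹ (w, t₀)).1, t) :=
      fun w t => perm_form hσ' t₀ w t
    have hπinj : ∀ w w', w ≠ w' → π w ≠ π w' :=
      fun w w' h => sigma_ne_fst hσ h t₀ t₀
    -- main pair conditions
    have hpair : ∀ (w w' : W), w ≠ w' → ∀ (t t' : orbitType A),
        s((t, fQ A E (π w)), (t', fQ A E (π w'))) = s((t, fQ A E w), (t', fQ A E w'))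
        ∧ E s((orep A t, π w), (orep A t', π w')) = E s((orep A t, w), (orep A t', w')) := by
      intro w w' hww' t t'
      have hne : ((w, t) : W × orbitType A) ≠ (w', t') :=
        fun hc => hww' (congrArg Prod.fst hc)
      have hc := mem_graphAut.mp hσ (w, t) (w', t') hne
      rw [hform, hform, bigF_pair, bigF_pair, if_neg (hπinj w w' hww'), if_neg hww'] at hc
      simp only [Sum.inr.injEq, Prod.mk.injEq] at hc
      exact hc
    by_cases hstraight : ∀ w, fQ A E (π w) = fQ A E w
    · -- straight case: build a lift
      have hfe : ∀ w, fEquiv A E w (π w) := fun w => fEquiv_of_fQ_eq (hstraight w).symm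
      choose δ hδ using hfe
      have hleft : Function.LeftInverse (fun w => (σ⁻¹ (w, t₀)).1) π := by
        intro w
        have h1 : σ (w, t₀) = (π w, t₀) := hform w t₀
        have h2 : σ⁻¹ (π w, t₀) = (w, t₀) := by
          rw [← h1]; exact Equiv.symm_apply_apply σ _
        show (σ⁻¹ (π w, t₀)).1 = w
        rw [h2]
      have hright : Function.RightInverse (fun w => (σ⁻¹ (w, t₀)).1) π := by
        intro w
        have h1 : σ⁻¹ (w, t₀) = ((σ⁻¹ (w, t₀)).1, t₀) := hforminv w t₀
        have h2 : σ ((σ⁻¹ (w, t₀)).1, t₀) = (w, t₀) := by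
          rw [← h1]; exact Equiv.apply_symm_apply σ _
        show (σ ((σ⁻¹ (w, t₀)).1, t₀)).1 = w
        rw [h2]
      set πE : Equiv.Perm W := ⟨π, fun w => (σ⁻¹ (w, t₀)).1, hleft, hright⟩ with hπE
      have hγ : wrPerm δ πE ∈ graphAut E := by
        refine mem_graphAut.mpr fun p q hpq => ?_
        obtain ⟨v, w⟩ := p
        obtain ⟨v', w'⟩ := q
        have happ : ∀ (u : V) (x : W), wrPerm δ πE (u, x) = (δ x u, π x) := fun u x => rfl
        rw [happ, happ]
        by_cases hww' : w = w'
        · subst hww'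
          have hvv' : v ≠ v' := by
            intro hc; exact hpq (by rw [hc])
          exact (hδ w).2 v v' hvv'
        · have hππ : π w ≠ π w' := hπinj w w' hww'
          have e1 : tOf A (δ w v) = tOf A v := Subtype.ext ((hδ w).1 v)
          have e2 : tOf A (δ w' v') = tOf A v' := Subtype.ext ((hδ w').1 v')
          calc E s((δ w v, π w), (δ w' v', π w'))
              = E s((orep A (tOf A (δ w v)), π w), (orep A (tOf A (δ w' v')), π w')) :=
                cross_rep hE hππ _ _
            _ = E s((orep A (tOf A v), π w), (orep A (tOf A v'), π w')) := by rw [e1, e2]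
            _ = E s((orep A (tOf A v), w), (orep A (tOf A v'), w')) :=
                (hpair w w' hww' (tOf A v) (tOf A v')).2
            _ = E s((v, w), (v', w')) := (cross_rep hE hww' v v').symm
      rw [hE] at hγ
      obtain ⟨β, hβ, α, hα, hf⟩ := hγ
      have hπβ : ∀ w, π w = β w := by
        intro w
        have h := hf (Classical.arbitrary V, w)
        have := congrArg Prod.snd h
        exact this
      refine mem_parMul.mpr ⟨β, hβ, fun p => ?_⟩
      have h := hform p.1 p.2
      rw [hπβ] at h
      exact h
    · -- crossed case
      push_neg at hstraight
      obtain ⟨w₀, hw₀⟩ := hstraight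
      obtain ⟨w₁, hw₁⟩ := exists_ne w₀
      have hD : ∀ w w', w ≠ w' →
          (fQ A E (π w) = fQ A E w ∧ fQ A E (π w') = fQ A E w') ∨
          (fQ A E (π w) = fQ A E w' ∧ fQ A E (π w') = fQ A E w) := by
        intro w w' hww'
        have h := (hpair w w' hww' t₀ t₀).1
        rw [Sym2.eq_iff] at h
        rcases h with ⟨h1, h2⟩ | ⟨h1, h2⟩
        · exact Or.inl ⟨(Prod.ext_iff.mp h1).2, (Prod.ext_iff.mp h2).2⟩
        · exact Or.inr ⟨(Prod.ext_iff.mp h1).2, (Prod.ext_iff.mp h2).2⟩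
      rcases hD w₀ w₁ (Ne.symm hw₁) with ⟨h1, _⟩ | ⟨h1, h2⟩
      · exact absurd h1 hw₀
      · have hQne : fQ A E w₁ ≠ fQ A E w₀ := fun hc => hw₀ (h1.trans hc)
        have hW2 : ∀ w, w = w₀ ∨ w = w₁ := by
          intro w₂
          by_contra hcc
          push_neg at hcc
          obtain ⟨hc0, hc1⟩ := hcc
          rcases hD w₀ w₂ (Ne.symm hc0) with ⟨g1, _⟩ | ⟨g1, g2⟩
          · exact hw₀ g1
          · have hw2w1 : fQ A E w₂ = fQ A E w₁ := g1.symm.trans h1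
            rcases hD w₁ w₂ (Ne.symm hc1) with ⟨k1, k2⟩ | ⟨k1, k2⟩
            · exact hQne (((g2.symm.trans k2).trans hw2w1).symm)
            · exact hQne ((g2.symm.trans k2).symm)
        have hcard : Nat.card W = 2 := by
          rw [Nat.card_eq_two_iff]
          refine ⟨w₀, w₁, Ne.symm hw₁, ?_⟩
          rw [Set.eq_univ_iff_forall]
          intro w
          rcases hW2 w with h | h
          · exact Or.inl h
          · exact Or.inr (by simpa using h)
        have hBne : B ≠ ⊥ := fun hc => hB ⟨hc, hcard⟩
        have hex : ∃ β ∈ B, β ≠ 1 := by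
          by_contra hc
          push_neg at hc
          exact hBne ((Subgroup.eq_bot_iff_forall B).mpr hc)
        obtain ⟨β, hβ, hβne⟩ := hex
        have hx : ∃ x, β x ≠ x := by
          by_contra hc
          push_neg at hc
          exact hβne (Equiv.ext hc)
        obtain ⟨x, hx⟩ := hx
        have hβswap : β w₀ = w₁ ∧ β w₁ = w₀ := by
          have hβmoves : β w₀ ≠ w₀ ∨ β w₁ ≠ w₁ := by
            rcases hW2 x with rfl | rfl
            · exact Or.inl hx
            · exact Or.inr hx
          have hb0 : β w₀ = w₁ := by
            rcases hW2 (β w₀) with h | h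
            · rcases hW2 (β w₁) with h' | h'
              · exact absurd (β.injective (h.trans h'.symm)) hw₁.symm.elim
              · rcases hβmoves with hm | hm
                · exact absurd h hm
                · exact absurd h' hm
            · exact h
          refine ⟨hb0, ?_⟩
          rcases hW2 (β w₁) with h | h
          · exact h
          · exact absurd (β.injective (hb0.trans h.symm)) (Ne.symm hw₁)
        rcases hW2 (π w₀) with hp0 | hp0
        · have hp1 : π w₁ = w₁ := by
            rcases hW2 (π w₁) with h | h
            · exact absurd (h.trans hp0.symm) (hπinj w₁ w₀ hw₁)
            · exact h
          refine mem_parMul.mpr ⟨1, B.one_mem, fun p => ?_⟩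
          have h := hform p.1 p.2
          have hπp : π p.1 = p.1 := by
            rcases hW2 p.1 with hp | hp
            · rw [hp, hp0]
            · rw [hp, hp1]
          rw [hπp] at h
          simpa using h
        · have hp1 : π w₁ = w₀ := by
            rcases hW2 (π w₁) with h | h
            · exact h
            · exact absurd (h.trans hp0.symm) (hπinj w₁ w₀ hw₁)
          refine mem_parMul.mpr ⟨β, hβ, fun p => ?_⟩
          have h := hform p.1 p.2
          have hπp : π p.1 = β p.1 := by
            rcases hW2 p.1 with hp | hp
            · rw [hp, hp0, hβswap.1]
            · rw [hp, hp1, hβswap.2]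
          rw [hπp] at h
          exact h
  · intro hσ
    obtain ⟨β, hβ, hf⟩ := mem_parMul.mp hσ
    have hf' : ∀ (w : W) (t : orbitType A), σ (w, t) = (β w, t) := fun w t => hf (w, t)
    refine mem_graphAut.mpr fun p q hpq => ?_
    obtain ⟨w, t⟩ := p
    obtain ⟨w', t'⟩ := q
    rw [hf', hf', bigF_pair, bigF_pair]
    by_cases hww' : w = w'
    · subst hww'
      rw [if_pos rfl, if_pos rfl]
    · have hββ : β w ≠ β w' := fun hc => hww' (β.injective hc)
      rw [if_neg hββ, if_neg hww', fQ_beta hE hβ, fQ_beta hE hβ]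
      have hEc := moveB hE hβ (orep A t, w) (orep A t', w')
        (fun hc => hww' (congrArg Prod.snd hc))
      simp only at hEc
      rw [hEc]

end Stmt5Main


/-- If `B ≠ I₂` and the parallel multiple `B × I_T` (where `T` is the set of
orbits of `A` on `V`) does not belong to GR, then `A ≀ B` does not belong to GR. -/
theorem stmt5 {V W : Type} [Nontrivial V] [Nontrivial W]
    (A : Subgroup (Equiv.Perm V)) (B : Subgroup (Equiv.Perm W))
    (hB : ¬ IsI2 B) (h : ¬ IsGR (parMul B (orbitType A))) :
    ¬ IsGR (imprimWr A B) := by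
  intro hGR
  obtain ⟨C, E, hE⟩ := hGR
  exact h ⟨_, bigF A E, bigF_aut A B hB E hE⟩
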